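/- Let n ≥ 2 and let X be an n-Hausdorff quasiregular homogeneous space. Then |X| ≤ 2^{c(X)·πχ(X)}. -/

import Mathlib

open Cardinal Set

/-- The cellularity of `X`: the supremum of the cardinalities of pairwise
disjoint families of nonempty open sets, taken at least `ℵ₀`. -/
noncomputable def cellularity (X : Type u) [TopologicalSpace X] : Cardinal.{u} :=
  max ℵ₀ (⨆ 𝒰 : {𝒰 : Set (Set X) //
    (∀ U ∈ 𝒰, IsOpen U ∧ U.Nonempty) ∧ 𝒰.PairwiseDisjoint id}, #𝒰.1)

/-- `B` is a local π-base at `x`: a family of nonempty open sets such that every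
open neighbourhood of `x` contains a member of `B`. -/
def IsLocalPiBase {X : Type u} [TopologicalSpace X] (x : X) (B : Set (Set X)) : Prop :=
  (∀ U ∈ B, IsOpen U ∧ U.Nonempty) ∧ ∀ V : Set X, IsOpen V → x ∈ V → ∃ U ∈ B, U ⊆ V

/-- The π-character of `X`: the supremum over `x ∈ X` of the least cardinality
of a local π-base at `x`, taken at least `ℵ₀`. -/
noncomputable def piCharacter (X : Type u) [TopologicalSpace X] : Cardinal.{u} :=
  max ℵ₀ (⨆ x : X, sInf {κ | ∃ B : Set (Set X), IsLocalPiBase x B ∧ #B = κ})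

/-- A space is homogeneous if for all `x, y` some self-homeomorphism maps `x`
to `y`. -/
def Homogeneous (X : Type*) [TopologicalSpace X] : Prop :=
  ∀ x y : X, ∃ h : X ≃ₜ X, h x = y

/-- A space is `n`-Hausdorff if any `n` distinct points admit open
neighbourhoods with empty total intersection. -/
def NHausdorff (n : ℕ) (X : Type*) [TopologicalSpace X] : Prop :=
  ∀ f : Fin n ↪ X, ∃ U : Fin n → Set X,
    (∀ i, IsOpen (U i) ∧ f i ∈ U i) ∧ ⋂ i, U i = ∅

/-- A space is quasiregular if every nonempty open set contains a nonempty
regular closed set, i.e. the closure of some nonempty open set. -/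
def Quasiregular (X : Type*) [TopologicalSpace X] : Prop :=
  ∀ U : Set X, IsOpen U → U.Nonempty →
    ∃ V : Set X, IsOpen V ∧ V.Nonempty ∧ closure V ⊆ U

/-!
A closing-off argument over a chain of length `(cellularity X)⁺` produces a set `D` of size at most
`2 ^ (c(X) πχ(X))` meeting the closure of every nonempty open set (θ-dense). By quasiregularity,
a local π-base at a point `e` can be shrunk to a family of regular closed sets converging to `e`
along a filter on an index set of size `πχ(X)`; homogeneity transports it to every `x`, and picking
points of `D` in the transported sets codes `x` by a map from the index set to `D`. All points with
the same code are limits of one net, so by `n`-Hausdorffness there are fewer than `n` of them, and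
`|X| ≤ |D| ^ πχ(X) · n ≤ 2 ^ (c(X) πχ(X))`.
-/

open Filter Topology

universe u

def IsThetaDense {X : Type*} [TopologicalSpace X] (D : Set X) : Prop :=
  ∀ V : Set X, IsOpen V → V.Nonempty → (closure V ∩ D).Nonempty

namespace Cardinal

lemma mk_iUnion_le_of_le {α ι : Type u} {μ : Cardinal.{u}} {f : ι → Set α} (hμ : ℵ₀ ≤ μ)
    (hι : #ι ≤ μ) (hf : ∀ i, #(f i) ≤ μ) : #(⋃ i, f i) ≤ μ :=
  (mk_iUnion_le f).trans (mul_le_of_le hμ hι (ciSup_le' hf))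

lemma exists_forall_lt_of_mk_le {c : Cardinal.{u}} (hc : ℵ₀ ≤ c)
    (s : Set (Order.succ c).ord.ToType) (hs : #s ≤ c) : ∃ t, ∀ r ∈ s, r < t := by
  refine not_isCofinal_iff.mp fun hcof => (Order.lt_succ_of_not_isMax (not_isMax c)).not_ge ?_
  have := Order.cof_le hcof
  rw [Ordinal.cof_toType, (isRegular_succ hc).cof_ord] at this
  exact this.trans hs

end Cardinal

/-- `D` is the union of an increasing chain of length `succ c`; by regularity of `succ c`, a subset
of `D` of size `c` already lies in one stage, and the next stage contains its image. -/
theorem exists_mk_le_forall_small_subset_image_subset {X : Type u} {c μ : Cardinal.{u}}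
    (hc : ℵ₀ ≤ c) (hcμ : c < μ) (hμ : μ ^ c = μ) (g : Set X → Set X)
    (hg : ∀ Z : Set X, #Z ≤ c → #(g Z) ≤ μ) :
    ∃ D : Set X, #D ≤ μ ∧ ∀ Z ⊆ D, #Z ≤ c → g Z ⊆ D := by
  have hμ₀ : ℵ₀ ≤ μ := hc.trans hcμ.le
  let step (S : Set X) : Set X := S ∪ ⋃ Z : {Z : Set X // Z ⊆ S ∧ #Z ≤ c}, g Z.1
  have mk_step : ∀ S : Set X, #S ≤ μ → #(step S) ≤ μ := fun S hS =>
    (mk_union_le _ _).trans <| add_le_of_le hμ₀ hS <| mk_iUnion_le_of_le hμ₀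
      ((mk_bounded_subset_le S c).trans (hμ ▸ power_le_power_right (max_le hS hμ₀)))
      fun Z => hg Z.1 Z.2.2
  let T := (Order.succ c).ord.ToType
  have mk_T : #T ≤ μ := by
    rw [mk_toType, card_ord]
    exact Order.succ_le_of_lt hcμ
  let D : T → Set X := wellFounded_lt.fix fun t D => ⋃ s : Iio t, step (D s s.2)
  have D_eq (t : T) : D t = ⋃ s : Iio t, step (D s) := wellFounded_lt.fix_eq _ t
  have mk_D (t : T) : #(D t) ≤ μ := by
    induction t using WellFoundedLT.induction with
    | ind t ih =>
      rw [D_eq]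
      exact mk_iUnion_le_of_le hμ₀ ((mk_subtype_le _).trans mk_T) fun s => mk_step _ (ih s s.2)
  refine ⟨⋃ t, step (D t), mk_iUnion_le_of_le hμ₀ mk_T fun t => mk_step _ (mk_D t), ?_⟩
  intro Z hZ hZc
  choose r hr using fun z : Z => mem_iUnion.mp (hZ z.2)
  obtain ⟨t, ht⟩ := exists_forall_lt_of_mk_le hc (range r) (mk_range_le.trans hZc)
  have hZt : Z ⊆ D t := fun z hz => by
    rw [D_eq]
    exact mem_iUnion.mpr ⟨⟨r ⟨z, hz⟩, ht _ (mem_range_self _)⟩, hr ⟨z, hz⟩⟩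
  exact subset_iUnion_of_subset t <| subset_union_of_subset_right
    (subset_iUnion (fun Z : {Z : Set X // Z ⊆ D t ∧ #Z ≤ c} => g Z.1) ⟨Z, hZt, hZc⟩) _

lemma exists_maximal_pairwiseDisjoint {α : Type*} (𝔅 : Set (Set α)) :
    ∃ M, Maximal (fun M => M ⊆ 𝔅 ∧ M.PairwiseDisjoint id) M :=
  zorn_subset _ fun C hC hchain =>
    ⟨⋃₀ C, ⟨sUnion_subset fun _ hA => (hC hA).1,
      (pairwiseDisjoint_sUnion hchain.directedOn).mpr fun _ hA => (hC hA).2⟩,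
      fun _ => subset_sUnion_of_mem⟩

lemma exists_subset_mk_le_of_subset_biUnion {α β : Type u} {D : Set α} {ℬ : α → Set β}
    {A : Set β} (hA : A ⊆ ⋃ z ∈ D, ℬ z) : ∃ Z ⊆ D, #Z ≤ #A ∧ A ⊆ ⋃ z ∈ Z, ℬ z := by
  choose z hzD hz using fun B : A => mem_iUnion₂.mp (hA B.2)
  exact ⟨range z, range_subset_iff.mpr hzD, mk_range_le,
    fun B hB => mem_iUnion₂.mpr ⟨z ⟨B, hB⟩, mem_range_self _, hz ⟨B, hB⟩⟩⟩

section Topology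

variable {X : Type u} [TopologicalSpace X]

lemma aleph0_le_cellularity : ℵ₀ ≤ cellularity X := le_max_left _ _

lemma aleph0_le_piCharacter : ℵ₀ ≤ piCharacter X := le_max_left _ _

lemma mk_le_cellularity {M : Set (Set X)} (hM : ∀ U ∈ M, IsOpen U ∧ U.Nonempty)
    (hdisj : M.PairwiseDisjoint id) : #M ≤ cellularity X :=
  (le_ciSup bddAbove_of_small (⟨M, hM, hdisj⟩ : {𝒰 : Set (Set X) //
    (∀ U ∈ 𝒰, IsOpen U ∧ U.Nonempty) ∧ 𝒰.PairwiseDisjoint id})).trans (le_max_right _ _)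

lemma exists_isLocalPiBase_mk_le (x : X) :
    ∃ B : Set (Set X), IsLocalPiBase x B ∧ #B ≤ piCharacter X := by
  have hne : {κ | ∃ B : Set (Set X), IsLocalPiBase x B ∧ #B = κ}.Nonempty :=
    ⟨_, {U | IsOpen U ∧ U.Nonempty},
      ⟨fun _ hU => hU, fun V hV hxV => ⟨V, ⟨hV, x, hxV⟩, subset_rfl⟩⟩, rfl⟩
  obtain ⟨B, hB, hBmk⟩ := csInf_mem hne
  exact ⟨B, hB, hBmk ▸ (le_ciSup bddAbove_of_small x).trans (le_max_right _ _)⟩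

/-- A maximal disjoint family `M` of π-base elements at points of `D` missing `V` has at most
`cellularity X` members, so some `d ∈ D` avoids `closure (⋃₀ M)`; maximality then puts `d` in
`closure V`. -/
lemma isThetaDense_of_forall_exists_notMem_closure {D : Set X} {ℬ : X → Set (Set X)}
    (hℬ : ∀ x, IsLocalPiBase x (ℬ x))
    (hD : ∀ A ⊆ ⋃ z ∈ D, ℬ z, #A ≤ cellularity X → closure (⋃₀ A) ≠ Set.univ →
      ∃ d ∈ D, d ∉ closure (⋃₀ A)) :
    IsThetaDense D := by
  intro V hV hVne
  obtain ⟨M, ⟨hMsub, hMdisj⟩, hMmax⟩ :=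
    exists_maximal_pairwiseDisjoint {B | B ∈ ⋃ z ∈ D, ℬ z ∧ Disjoint B V}
  have hMopen : ∀ B ∈ M, IsOpen B ∧ B.Nonempty := fun B hB => by
    obtain ⟨z, -, hz⟩ := mem_iUnion₂.mp (hMsub hB).1
    exact (hℬ z).1 B hz
  have hVM : Disjoint V (closure (⋃₀ M)) :=
    (disjoint_sUnion_right.mpr fun B hB => (hMsub hB).2.symm).closure_right hV
  obtain ⟨d, hdD, hdM⟩ := hD M (fun B hB => (hMsub hB).1) (mk_le_cellularity hMopen hMdisj)
    fun h => hVne.ne_empty (by simpa [h] using hVM)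
  refine ⟨d, by_contra fun hdV => ?_, hdD⟩
  obtain ⟨B, hBℬ, hBsub⟩ := (hℬ d).2 _ (isClosed_closure.isOpen_compl.inter
    isClosed_closure.isOpen_compl) ⟨hdV, hdM⟩
  have hBM : ∀ B' ∈ M, Disjoint B B' := fun B' hB' =>
    disjoint_left.mpr fun y hyB hyB' =>
      (hBsub hyB).2 (subset_closure (mem_sUnion_of_mem hyB' hB'))
  have hBV : Disjoint B V := disjoint_left.mpr fun y hyB hyV => (hBsub hyB).1 (subset_closure hyV)
  have hBnotM : B ∉ M := fun hB => by
    obtain ⟨y, hy⟩ := ((hℬ d).1 B hBℬ).2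
    exact disjoint_left.mp (hBM B hB) hy hy
  exact hBnotM <| hMmax ⟨insert_subset ⟨mem_iUnion₂.mpr ⟨d, hdD, hBℬ⟩, hBV⟩ hMsub,
    hMdisj.insert fun B' hB' _ => hBM B' hB'⟩ (subset_insert _ _) (mem_insert _ _)

/-- Closing off under "pick a point outside `closure (⋃₀ A)`" for all families `A` of at most
`cellularity X` π-base elements at points already chosen. -/
theorem exists_isThetaDense_mk_le [Nonempty X] :
    ∃ D : Set X, IsThetaDense D ∧ #D ≤ 2 ^ (cellularity X * piCharacter X) := by
  set c := cellularity X
  set κ := c * piCharacter X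
  have hc : ℵ₀ ≤ c := aleph0_le_cellularity
  have hcκ : c ≤ κ := le_mul_right (aleph0_pos.trans_le aleph0_le_piCharacter).ne'
  have hκ : ℵ₀ ≤ κ := hc.trans hcκ
  choose ℬ hℬ hℬmk using exists_isLocalPiBase_mk_le (X := X)
  let pick (A : Set (Set X)) : X := Classical.epsilon fun x => x ∉ closure (⋃₀ A)
  let g (Z : Set X) : Set X := pick '' {A | A ⊆ ⋃ z ∈ Z, ℬ z ∧ #A ≤ c}
  have hpow : ((2 : Cardinal) ^ κ) ^ c = 2 ^ κ := by
    rw [← power_mul, mul_eq_left hκ hcκ (aleph0_pos.trans_le hc).ne']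
  have hg : ∀ Z : Set X, #Z ≤ c → #(g Z) ≤ 2 ^ κ := fun Z hZ => by
    have hℬZ : #(⋃ z ∈ Z, ℬ z) ≤ κ :=
      (mk_biUnion_le _ _).trans (mul_le_mul' hZ (ciSup_le' fun z => hℬmk z))
    refine mk_image_le.trans <| (mk_bounded_subset_le _ c).trans ?_
    exact hpow ▸ power_le_power_right (max_le (hℬZ.trans (cantor κ).le) (hκ.trans (cantor κ).le))
  obtain ⟨D, hDmk, hDg⟩ := exists_mk_le_forall_small_subset_image_subset hc
    (hcκ.trans_lt (cantor κ)) hpow g hg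
  refine ⟨D, isThetaDense_of_forall_exists_notMem_closure hℬ fun A hA hAc hA_ne => ?_, hDmk⟩
  obtain ⟨Z, hZD, hZA, hAZ⟩ := exists_subset_mk_le_of_subset_biUnion hA
  exact ⟨pick A, hDg Z hZD (hZA.trans hAc) ⟨A, ⟨hAZ, hAc⟩, rfl⟩,
    Classical.epsilon_spec ((ne_univ_iff_exists_notMem _).mp hA_ne)⟩

lemma Quasiregular.exists_tendsto_closure_smallSets (hqr : Quasiregular X) (e : X) :
    ∃ (ι : Type u) (Q : ι → Set X) (l : Filter ι), l.NeBot ∧ #ι ≤ piCharacter X ∧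
      (∀ i, IsOpen (Q i) ∧ (Q i).Nonempty) ∧
      Tendsto (fun i => closure (Q i)) l (𝓝 e).smallSets := by
  obtain ⟨B, hB, hBmk⟩ := exists_isLocalPiBase_mk_le e
  choose Q hQo hQne hQsub using fun U : B => hqr U.1 (hB.1 U U.2).1 (hB.1 U U.2).2
  refine ⟨B, Q, comap (fun U => closure (Q U)) (𝓝 e).smallSets, comap_neBot_iff.mpr ?_, hBmk,
    fun U => ⟨hQo U, hQne U⟩, tendsto_comap⟩
  intro t ht
  obtain ⟨V, hV, hVt⟩ := eventually_smallSets.mp ht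
  obtain ⟨W, hWV, hWo, heW⟩ := mem_nhds_iff.mp hV
  obtain ⟨U, hU, hUW⟩ := hB.2 W hWo heW
  exact ⟨⟨U, hU⟩, hVt _ ((hQsub _).trans (hUW.trans hWV))⟩

lemma Homogeneous.exists_forall_tendsto_nhds (hhom : Homogeneous X) {D : Set X}
    (hD : IsThetaDense D) {ι : Type*} {l : Filter ι} {Q : ι → Set X}
    (hQ : ∀ i, IsOpen (Q i) ∧ (Q i).Nonempty) {e : X}
    (hQe : Tendsto (fun i => closure (Q i)) l (𝓝 e).smallSets) :
    ∃ s : X → ι → D, ∀ x, Tendsto (fun i => (s x i : X)) l (𝓝 x) := by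
  have (x : X) : ∃ f : ι → D, Tendsto (fun i => (f i : X)) l (𝓝 x) := by
    obtain ⟨h, rfl⟩ := hhom e x
    have hmeet (i : ι) : (h '' closure (Q i) ∩ D).Nonempty :=
      h.image_closure (Q i) ▸ hD _ (h.isOpenMap _ (hQ i).1) ((hQ i).2.image h)
    choose f hfQ hfD using hmeet
    exact ⟨fun i => ⟨f i, hfD i⟩,
      ((h.continuous.tendsto e).image_smallSets.comp hQe).of_smallSets (Eventually.of_forall hfQ)⟩
  choose s hs using this
  exact ⟨s, hs⟩

lemma NHausdorff.mk_setOf_le_nhds_lt {n : ℕ} (hX : NHausdorff n X) (F : Filter X) [F.NeBot] :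
    #{x | F ≤ 𝓝 x} < n := by
  by_contra! h
  obtain ⟨f⟩ : Nonempty (Fin n ↪ {x | F ≤ 𝓝 x}) := by
    rwa [← lift_mk_le', lift_mk_fin, lift_uzero]
  obtain ⟨U, hU, hUempty⟩ := hX (f.trans (Function.Embedding.subtype _))
  have : ∀ᶠ x in F, x ∈ ⋂ i, U i :=
    (eventually_all.mpr fun i => (f i).2 ((hU i).1.mem_nhds (hU i).2)).mono fun _ => mem_iInter.mpr
  simpa [hUempty] using this.exists

end Topology

theorem stmt12_general (n : ℕ) (X : Type u) [TopologicalSpace X]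
    (hX : NHausdorff n X) (hqr : Quasiregular X) (hhom : Homogeneous X) :
    #X ≤ 2 ^ (cellularity X * piCharacter X) := by
  rcases isEmpty_or_nonempty X with _ | _
  · simp
  obtain ⟨e⟩ := ‹Nonempty X›
  set κ := cellularity X * piCharacter X
  have hπκ : piCharacter X ≤ κ := le_mul_left (aleph0_pos.trans_le aleph0_le_cellularity).ne'
  have hκ : ℵ₀ ≤ 2 ^ κ := aleph0_le_piCharacter.trans (hπκ.trans (cantor κ).le)
  obtain ⟨D, hD, hDmk⟩ := exists_isThetaDense_mk_le (X := X)
  obtain ⟨ι, Q, l, hl, hιmk, hQ, hQe⟩ := hqr.exists_tendsto_closure_smallSets e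
  obtain ⟨s, hs⟩ := hhom.exists_forall_tendsto_nhds hD hQ hQe
  have hfiber (σ : ι → D) : #(s ⁻¹' {σ}) ≤ n :=
    (mk_le_mk_of_subset fun x (hx : s x = σ) => hx ▸ hs x).trans
      (hX.mk_setOf_le_nhds_lt (map (fun i => (σ i : X)) l)).le
  calc #X ≤ #D ^ #ι * n := power_def D ι ▸ mk_le_mk_mul_of_mk_preimage_le s hfiber
    _ ≤ (2 ^ κ) ^ κ * 2 ^ κ :=
        mul_le_mul' ((power_le_power_right hDmk).trans (power_le_power_left
          (hκ.trans_lt' aleph0_pos).ne' (hιmk.trans hπκ))) (natCast_lt_aleph0.le.trans hκ)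
    _ = 2 ^ κ := by rw [← power_mul, mul_eq_self (aleph0_le_piCharacter.trans hπκ), mul_eq_self hκ]

theorem stmt12 (n : ℕ) (hn : 2 ≤ n) (X : Type u) [TopologicalSpace X]
    (hX : NHausdorff n X) (hqr : Quasiregular X) (hhom : Homogeneous X) :
    #X ≤ 2 ^ (cellularity X * piCharacter X) :=
  stmt12_general n X hX hqr hhom
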